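/- (Intertwining property of the modification matrix under the shift z → z + τ) Let N ≥ 1, τ ∈ ℂ with Im τ > 0, u₁, …, u_N ∈ ℂ, and define the N × N matrix Ξ₁(z) with entries Ξ₁_{kj}(z) = θ[k/N − 1/2; N/2](z − N u_j, Nτ) for 1 ≤ k, j ≤ N. Then for all z ∈ ℂ and 1 ≤ j ≤ N: Ξ₁_{kj}(z + τ) = exp(2πi(−z/N − τ/(2N) + u_j − 1/2)) · Ξ₁_{k+1, j}(z) for 1 ≤ k ≤ N − 1, and Ξ₁_{N j}(z + τ) = exp(2πi(−z/N − τ/(2N) + u_j − 1/2)) · Ξ₁_{1 j}(z). Consequently Ξ₁(z + τ) = exp(−2πi(z/N + τ/(2N))) · Λ⁻¹-type cyclic shift of rows of Ξ₁(z) multiplied on the right by the diagonal matrix diag(exp(2πi(u_j − 1/2))). -/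

import Mathlib

noncomputable section

/-- The theta function with characteristics
θ[a; b](z, τ) = Σ_{j∈ℤ} exp(2πi((j+a)²τ/2 + (j+a)(z+b))). -/
def thetaC (a b z τ : ℂ) : ℂ :=
  ∑' j : ℤ, Complex.exp (2 * Real.pi * Complex.I *
    (((j : ℂ) + a) ^ 2 * τ / 2 + ((j : ℂ) + a) * (z + b)))

/-- The modification (Hecke transformation) matrix
Ξ₁_{kj}(z) = θ[k/N − 1/2; N/2](z − N u_j, Nτ), with rows indexed by k = 1, …, N
(represented by `k : Fin N` with value `k.val + 1`). -/
def XiMat (N : ℕ) (τ : ℂ) (u : Fin N → ℂ) (z : ℂ) : Matrix (Fin N) (Fin N) ℂ :=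
  Matrix.of fun k j =>
    thetaC (((k.val : ℂ) + 1) / N - 1 / 2) ((N : ℂ) / 2) (z - N * u j) (N * τ)

/-! Shifting `z` by `s` periods multiplies θ by an exponential factor and shifts the first
characteristic by `s`; integer shifts of the first characteristic do nothing. Since the rows of
`XiMat` have first characteristics spaced `1/N` apart, the shift `z ↦ z + τ = z + (Nτ)·(1/N)`
moves each row onto the next one, cyclically. -/

lemma thetaC_add_intCast (a b z τ : ℂ) (m : ℤ) :
    thetaC (a + m) b z τ = thetaC a b z τ := by
  unfold thetaC
  conv_rhs => rw [← (Equiv.addRight m).tsum_eq]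
  congr 1
  funext j
  push_cast [Equiv.coe_addRight]
  ring_nf

lemma thetaC_add_mul (a b z τ s : ℂ) :
    thetaC a b (z + τ * s) τ =
      Complex.exp (2 * Real.pi * Complex.I * (-τ * s ^ 2 / 2 - s * (z + b))) *
        thetaC (a + s) b z τ := by
  rw [thetaC, thetaC, ← tsum_mul_left]
  congr 1
  funext j
  rw [← Complex.exp_add]
  ring_nf

lemma Fin.val_add_one_add_mul_div {N : ℕ} [NeZero N] (k : Fin N) :
    ((k + 1 : Fin N) : ℕ) + N * ((k + 1) / N) = k + 1 := by
  rw [Fin.val_add, Fin.val_one', Nat.add_mod_mod, Nat.mod_add_div]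

lemma XiMat_char_add_inv {N : ℕ} [NeZero N] (k : Fin N) :
    ((k : ℂ) + 1) / N - 1 / 2 + 1 / N =
      (((k + 1 : Fin N) : ℕ) + 1 : ℂ) / N - 1 / 2 + (((k + 1 : ℕ) / N : ℕ) : ℤ) := by
  have hN : (N : ℂ) ≠ 0 := NeZero.ne _
  have hk := congrArg (Nat.cast : ℕ → ℂ) (Fin.val_add_one_add_mul_div k)
  generalize ((k : ℕ) + 1) / N = m at hk ⊢
  rw [Int.cast_natCast]
  push_cast at hk
  linear_combination (norm := (field_simp; ring)) -hk / N

theorem XiMat_intertwines_shift_general (N : ℕ) [NeZero N] (τ : ℂ)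
    (u : Fin N → ℂ) :
    ∀ (z : ℂ) (k j : Fin N),
      XiMat N τ u (z + τ) k j =
        Complex.exp (2 * Real.pi * Complex.I *
            (-z / N - τ / (2 * N) + u j - 1 / 2)) *
          XiMat N τ u z (k + 1) j := by
  intro z k j
  have hN : (N : ℂ) ≠ 0 := NeZero.ne _
  have hz : z + τ - N * u j = (z - N * u j) + (N * τ) * (1 / N) := by
    field_simp
    ring
  simp only [XiMat, Matrix.of_apply]
  rw [hz, thetaC_add_mul, XiMat_char_add_inv, thetaC_add_intCast]
  congr 3
  field_simp
  ring

/-- Intertwining property of the modification matrix under z → z + τ: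
Ξ₁_{kj}(z + τ) = exp(2πi(−z/N − τ/(2N) + u_j − 1/2)) Ξ₁_{k+1, j}(z),
where the row index k + 1 is understood cyclically (k = N wraps around to 1),
so that Ξ₁(z+τ) is the cyclic row shift of Ξ₁(z) multiplied by
exp(−2πi(z/N + τ/(2N))) and by the diagonal matrix diag(exp(2πi(u_j − 1/2))). -/
theorem XiMat_intertwines_shift (N : ℕ) [NeZero N] (τ : ℂ) (hτ : 0 < τ.im)
    (u : Fin N → ℂ) :
    ∀ (z : ℂ) (k j : Fin N),
      XiMat N τ u (z + τ) k j =
        Complex.exp (2 * Real.pi * Complex.I *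
            (-z / N - τ / (2 * N) + u j - 1 / 2)) *
          XiMat N τ u z (k + 1) j :=
  XiMat_intertwines_shift_general N τ u
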